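/- arXiv:2205.03151 — 3 statements merged into one kernel-verified Lean document; each statement's English description precedes it below -/
import Mathlib

section
/- Let SF = (A,R) be a SETAF and E ∈ cf(SF). Then E ∈ pref(SF) if and only if E ∈ adm(SF) and the only admissible set of the E-reduct SF^E is the empty set (i.e., ⋃ adm(SF^E) = ∅). -/
/-!
For admissible `E`, the map `T ↦ T \ E` sends admissible supersets of `E` to admissible sets of
the reduct `SF^E`, and `S ↦ E ∪ S` sends admissible sets of `SF^E` back to admissible supersets
of `E`. Hence `E` has a proper admissible superset iff `SF^E` has a nonempty admissible set.
-/

/-- A SETAF: a finite set of arguments `A` together with an attack relation `R`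
    whose elements are pairs `(T, h)` with nonempty tail `T ⊆ A` and head `h ∈ A`. -/
structure SETAF (α : Type*) where
  A : Set α
  R : Set (Set α × α)
  finA : A.Finite
  tail_nonempty : ∀ r ∈ R, (r.1 : Set α).Nonempty
  tail_subset : ∀ r ∈ R, r.1 ⊆ A
  head_mem : ∀ r ∈ R, r.2 ∈ A

namespace SETAF

variable {α : Type*}

/-- `S ↦_R a` : the set `S` attacks the argument `a`. -/
def attacksArg (SF : SETAF α) (S : Set α) (a : α) : Prop :=
  ∃ T, T ⊆ S ∧ (T, a) ∈ SF.R

/-- `S ↦_R S'` : the set `S` attacks the set `S'`. -/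
def attacksSet (SF : SETAF α) (S S' : Set α) : Prop :=
  ∃ a ∈ S', SF.attacksArg S a

/-- `S⁺_R`. -/
def plus (SF : SETAF α) (S : Set α) : Set α := {a | SF.attacksArg S a}

/-- The range `S⊕_R = S ∪ S⁺_R`. -/
def range (SF : SETAF α) (S : Set α) : Set α := S ∪ SF.plus S

/-- Conflict-free sets. -/
def cf (SF : SETAF α) : Set (Set α) :=
  {S | S ⊆ SF.A ∧ ∀ r ∈ SF.R, ¬ (r.1 ∪ {r.2} ⊆ S)}

/-- `S` defends `a` : every attacker-set of `a` is counter-attacked by `S`. -/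
def defends (SF : SETAF α) (S : Set α) (a : α) : Prop :=
  ∀ B ⊆ SF.A, SF.attacksArg B a → SF.attacksSet S B

/-- Admissible sets. -/
def adm (SF : SETAF α) : Set (Set α) :=
  {S | S ∈ SF.cf ∧ ∀ a ∈ S, SF.defends S a}

/-- Complete extensions. -/
def com (SF : SETAF α) : Set (Set α) :=
  {S | S ∈ SF.adm ∧ ∀ a ∈ SF.A, SF.defends S a → a ∈ S}

/-- Stable extensions. -/
def stb (SF : SETAF α) : Set (Set α) :=
  {S | S ∈ SF.cf ∧ ∀ a ∈ SF.A \ S, SF.attacksArg S a}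

/-- Preferred extensions. -/
def pref (SF : SETAF α) : Set (Set α) :=
  {S | S ∈ SF.adm ∧ ¬ ∃ T ∈ SF.adm, S ⊂ T}

/-- Semi-stable extensions. -/
def sem (SF : SETAF α) : Set (Set α) :=
  {S | S ∈ SF.adm ∧ ¬ ∃ T ∈ SF.adm, SF.range S ⊂ SF.range T}

/-- The `E`-reduct `SF^E` of a SETAF. -/
def reduct (SF : SETAF α) (E : Set α) : SETAF α where
  A := SF.A \ SF.range E
  R := {r | ∃ T h, (T, h) ∈ SF.R ∧ T ∩ SF.plus E = ∅ ∧ ¬ T ⊆ E ∧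
        h ∈ SF.A \ SF.range E ∧ r = (T \ E, h)}
  finA := SF.finA.subset Set.diff_subset
  tail_nonempty := by
    rintro r ⟨T, h, hR, hTE, hTsub, hh, rfl⟩
    exact Set.diff_nonempty.mpr hTsub
  tail_subset := by
    rintro r ⟨T, h, hR, hTE, hTsub, hh, rfl⟩
    rintro t ⟨htT, htE⟩
    refine ⟨SF.tail_subset (T, h) hR htT, ?_⟩
    rintro (hE | hplus)
    · exact htE hE
    · exact Set.eq_empty_iff_forall_notMem.mp hTE t ⟨htT, hplus⟩
  head_mem := by
    rintro r ⟨T, h, hR, hTE, hTsub, hh, rfl⟩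
    exact hh

/-- The restriction `SF↓_S^D` of a SETAF w.r.t. a set `S` and a set `D` of
    deleted (defeated) arguments. -/
def restrict (SF : SETAF α) (D S : Set α) : SETAF α where
  A := (SF.A ∩ S) \ D
  R := {r | ∃ T h, (T, h) ∈ SF.R ∧ h ∈ (SF.A ∩ S) \ D ∧ T ∩ D = ∅ ∧
        (T ∩ ((SF.A ∩ S) \ D)).Nonempty ∧ r = (T ∩ ((SF.A ∩ S) \ D), h)}
  finA := SF.finA.subset (fun a ha => ha.1.1)
  tail_nonempty := by
    rintro r ⟨T, h, _, _, _, hne, rfl⟩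
    exact hne
  tail_subset := by
    rintro r ⟨T, h, _, _, _, _, rfl⟩
    exact Set.inter_subset_right
  head_mem := by
    rintro r ⟨T, h, _, hh, _, _, rfl⟩
    exact hh

/-- Edge of the primal graph of a SETAF. -/
def primalEdge (SF : SETAF α) (t h : α) : Prop := ∃ T, (T, h) ∈ SF.R ∧ t ∈ T

/-- `a` influences `b` : there is a directed path from `a` to `b` in the primal graph. -/
def influences (SF : SETAF α) : α → α → Prop := Relation.ReflTransGen SF.primalEdge

/-- The strongly connected component of an argument in the primal graph. -/
def scc (SF : SETAF α) (a : α) : Set α :=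
  {b | SF.influences a b ∧ SF.influences b a}

/-- The strongly connected components of (the primal graph of) a SETAF. -/
def SCCs (SF : SETAF α) : Set (Set α) :=
  {S | ∃ a ∈ SF.A, S = SF.scc a}

/-- Defeated arguments of an SCC `S` w.r.t. `E`. -/
def Dscc (SF : SETAF α) (S E : Set α) : Set α :=
  {a ∈ S | SF.attacksArg (E \ S) a}

/-- Provisionally defeated arguments of an SCC `S` w.r.t. `E`. -/
def Pscc (SF : SETAF α) (S E : Set α) : Set α :=
  {a ∈ S | SF.attacksArg (SF.A \ (S ∪ SF.plus E)) a} \ SF.Dscc S E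

/-- Undefeated arguments of an SCC `S` w.r.t. `E`. -/
def Uscc (SF : SETAF α) (S E : Set α) : Set α :=
  S \ (SF.Dscc S E ∪ SF.Pscc S E)

/-- `UP_SF(S,E) = U_SF(S,E) ∪ P_SF(S,E)`. -/
def UPscc (SF : SETAF α) (S E : Set α) : Set α :=
  SF.Uscc S E ∪ SF.Pscc S E

/-- The mitigated attacks `M_SF(S,E)`. -/
def Mscc (SF : SETAF α) (S E : Set α) : Set (Set α × α) :=
  {r ∈ (SF.restrict (SF.plus (E \ S)) (SF.UPscc S E)).R |
    ∀ T', (T', r.2) ∈ SF.R → r.1 ⊆ T' → ¬ T' \ r.1 ⊆ E}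

/-- `a` is acceptable considering `M` w.r.t. `E` (in the given SETAF). -/
def acceptableM (SF : SETAF α) (M : Set (Set α × α)) (E : Set α) (a : α) : Prop :=
  ∀ T, (T, a) ∈ SF.R → ∃ X t, (X, t) ∈ SF.R ∧ (X, t) ∉ M ∧ X ⊆ E ∧ t ∈ T

/-- `adm(SF, C, M)` : admissible in `C` considering `M`. -/
def admCM (SF : SETAF α) (C : Set α) (M : Set (Set α × α)) : Set (Set α) :=
  {E | E ⊆ C ∧ E ∈ SF.cf ∧ ∀ a ∈ E, SF.acceptableM M E a}

/-- `com(SF, C, M)` : complete in `C` considering `M`. -/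
def comCM (SF : SETAF α) (C : Set α) (M : Set (Set α × α)) : Set (Set α) :=
  {E | E ∈ SF.admCM C M ∧ ∀ a ∈ C, SF.acceptableM M E a → a ∈ E}

/-- `pref(SF, C, M)` : preferred in `C` considering `M`. -/
def prefCM (SF : SETAF α) (C : Set α) (M : Set (Set α × α)) : Set (Set α) :=
  {E | E ∈ SF.admCM C M ∧ ¬ ∃ E' ∈ SF.admCM C M, E ⊂ E'}

/-- The characteristic function `F^M_{SF,C}` of `SF` in `C` considering `M`. -/
def charF (SF : SETAF α) (C : Set α) (M : Set (Set α × α)) (E : Set α) : Set α :=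
  {a ∈ C | SF.acceptableM M E a}

/-- The empty SETAF `(∅, ∅)`. -/
def emptySETAF (α : Type*) : SETAF α where
  A := ∅
  R := ∅
  finA := Set.finite_empty
  tail_nonempty := by simp
  tail_subset := by simp
  head_mem := by simp

end SETAF

namespace SETAF

variable {α : Type*} {SF : SETAF α} {E S T : Set α} {a t : α}

theorem attacksArg.mono (h : S ⊆ T) : SF.attacksArg S a → SF.attacksArg T a :=
  fun ⟨U, hU, hR⟩ => ⟨U, hU.trans h, hR⟩

theorem not_attacksArg_of_mem_cf (hS : S ∈ SF.cf) (ha : a ∈ S) : ¬ SF.attacksArg S a := by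
  rintro ⟨U, hUS, hR⟩
  exact hS.2 _ hR (Set.union_subset hUS (Set.singleton_subset_iff.2 ha))

theorem diff_mem_reduct_R {h : α} (hR : (T, h) ∈ SF.R) (hT : ∀ t ∈ T, ¬ SF.attacksArg E t)
    (hTE : ¬ T ⊆ E) (hh : h ∈ (SF.reduct E).A) : (T \ E, h) ∈ (SF.reduct E).R :=
  ⟨T, h, hR, Set.eq_empty_iff_forall_notMem.2 fun t ⟨ht, hatk⟩ => hT t ht hatk, hTE, hh, rfl⟩

theorem attacksArg_union_of_reduct (h : (SF.reduct E).attacksArg S a) :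
    SF.attacksArg (E ∪ S) a := by
  obtain ⟨_, hS, T, _, hR, -, -, -, ⟨⟩⟩ := h
  exact ⟨T, Set.sdiff_subset_iff.1 hS, hR⟩

theorem diff_subset_reduct_A (hT : T ∈ SF.cf) (hET : E ⊆ T) : T \ E ⊆ (SF.reduct E).A := by
  rintro t ⟨htT, htE⟩
  refine ⟨hT.1 htT, ?_⟩
  rintro (ht | ht)
  · exact htE ht
  · exact not_attacksArg_of_mem_cf hT htT (attacksArg.mono hET ht)

theorem attacksArg_reduct_diff (hT : T ∈ SF.cf) (hET : E ⊆ T) (h : SF.attacksArg T t)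
    (ht : t ∈ (SF.reduct E).A) : (SF.reduct E).attacksArg (T \ E) t := by
  obtain ⟨C, hCT, hR⟩ := h
  refine ⟨C \ E, Set.sdiff_subset_sdiff_left hCT, diff_mem_reduct_R hR ?_ ?_ ht⟩
  · exact fun c hc hatk => not_attacksArg_of_mem_cf hT (hCT hc) (attacksArg.mono hET hatk)
  · exact fun hCE => ht.2 (Or.inr ⟨C, hCE, hR⟩)

theorem cf_union_of_cf_reduct (hE : E ∈ SF.adm) (hS : S ∈ (SF.reduct E).cf) :
    E ∪ S ∈ SF.cf := by
  refine ⟨Set.union_subset hE.1.1 (hS.1.trans Set.sdiff_subset), ?_⟩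
  rintro ⟨T, h⟩ hR hsub
  obtain ⟨hT, hh⟩ := Set.union_subset_iff.1 hsub
  have hh : h ∈ E ∪ S := Set.singleton_subset_iff.1 hh
  have hT_unattacked : ∀ t ∈ T, ¬ SF.attacksArg E t := by
    intro t ht
    rcases hT ht with ht | ht
    · exact not_attacksArg_of_mem_cf hE.1 ht
    · exact fun hatk => (hS.1 ht).2 (Or.inr hatk)
  rcases hh with hh | hh
  · obtain ⟨t, ht, hatk⟩ := hE.2 h hh T (SF.tail_subset _ hR) ⟨T, subset_rfl, hR⟩
    exact hT_unattacked t ht hatk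
  · by_cases hTE : T ⊆ E
    · exact (hS.1 hh).2 (Or.inr ⟨T, hTE, hR⟩)
    · exact hS.2 _ (diff_mem_reduct_R hR hT_unattacked hTE (hS.1 hh))
        (Set.union_subset (Set.sdiff_subset_iff.2 hT) (Set.singleton_subset_iff.2 hh))

theorem defends_union_of_adm_reduct (hE : E ∈ SF.adm) (hS : S ∈ (SF.reduct E).adm)
    (ha : a ∈ E ∪ S) : SF.defends (E ∪ S) a := by
  rintro B hB ⟨T, hTB, hR⟩
  rcases ha with ha | ha
  · obtain ⟨t, ht, hatk⟩ := hE.2 a ha B hB ⟨T, hTB, hR⟩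
    exact ⟨t, ht, attacksArg.mono Set.subset_union_left hatk⟩
  by_cases hT : ∃ t ∈ T, SF.attacksArg E t
  · obtain ⟨t, ht, hatk⟩ := hT
    exact ⟨t, hTB ht, attacksArg.mono Set.subset_union_left hatk⟩
  push Not at hT
  have hTE : ¬ T ⊆ E := fun hTE => (hS.1.1 ha).2 (Or.inr ⟨T, hTE, hR⟩)
  have hred := diff_mem_reduct_R hR hT hTE (hS.1.1 ha)
  obtain ⟨t, ht, hatk⟩ :=
    hS.2 a ha (T \ E) ((SF.reduct E).tail_subset _ hred) ⟨_, subset_rfl, hred⟩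
  exact ⟨t, hTB ht.1, attacksArg_union_of_reduct hatk⟩

theorem adm_union_of_adm_reduct (hE : E ∈ SF.adm) (hS : S ∈ (SF.reduct E).adm) :
    E ∪ S ∈ SF.adm :=
  ⟨cf_union_of_cf_reduct hE hS.1, fun _ ha => defends_union_of_adm_reduct hE hS ha⟩

theorem diff_mem_cf_reduct (hT : T ∈ SF.cf) (hET : E ⊆ T) : T \ E ∈ (SF.reduct E).cf := by
  refine ⟨diff_subset_reduct_A hT hET, ?_⟩
  rintro _ ⟨T₀, h, hR, -, -, -, rfl⟩ hsub
  obtain ⟨hT₀, hh⟩ := Set.union_subset_iff.1 hsub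
  have hT₀T : T₀ ⊆ T :=
    (Set.sdiff_subset_iff.1 (hT₀.trans Set.sdiff_subset)).trans (Set.union_subset hET le_rfl)
  exact hT.2 _ hR (Set.union_subset hT₀T (hh.trans Set.sdiff_subset))

theorem diff_mem_adm_reduct (hT : T ∈ SF.adm) (hET : E ⊆ T) : T \ E ∈ (SF.reduct E).adm := by
  refine ⟨diff_mem_cf_reduct hT.1 hET, ?_⟩
  rintro a ha B hB ⟨_, hTB, T₀, _, hR, hT₀E, -, -, ⟨⟩⟩
  obtain ⟨t, ht, hatk⟩ := hT.2 a ha.1 T₀ (SF.tail_subset _ hR) ⟨T₀, subset_rfl, hR⟩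
  have htE : t ∉ E := fun htE => not_attacksArg_of_mem_cf hT.1 (hET htE) hatk
  have htA : t ∈ (SF.reduct E).A := hB (hTB ⟨ht, htE⟩)
  exact ⟨t, hTB ⟨ht, htE⟩, attacksArg_reduct_diff hT.1 hET hatk htA⟩

end SETAF

open SETAF in
theorem stmt8_general {α : Type*} (SF : SETAF α) (E : Set α) :
    E ∈ SF.pref ↔ E ∈ SF.adm ∧ ⋃₀ ((SF.reduct E).adm) = ∅ := by
  constructor
  · rintro ⟨hE, hmax⟩
    refine ⟨hE, Set.eq_empty_iff_forall_notMem.2 ?_⟩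
    rintro x ⟨S, hS, hx⟩
    have hxE : x ∉ E := fun h => (hS.1.1 hx).2 (Or.inl h)
    exact hmax ⟨E ∪ S, adm_union_of_adm_reduct hE hS,
      (Set.ssubset_iff_of_subset Set.subset_union_left).2 ⟨x, Or.inr hx, hxE⟩⟩
  · rintro ⟨hE, hempty⟩
    refine ⟨hE, ?_⟩
    rintro ⟨T, hT, hET⟩
    obtain ⟨s, hsT, hsE⟩ := Set.exists_of_ssubset hET
    have hdiff : T \ E = ∅ := Set.sUnion_eq_empty.1 hempty _ (diff_mem_adm_reduct hT hET.subset)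
    exact (Set.eq_empty_iff_forall_notMem.1 hdiff s) ⟨hsT, hsE⟩

/-- Proposition 1(3): for conflict-free `E`, `E` is preferred iff `E` is
    admissible and the union of all admissible sets of `SF^E` is empty. -/
theorem stmt8 {α : Type*} (SF : SETAF α) (E : Set α) (hcf : E ∈ SF.cf) :
    E ∈ SF.pref ↔ E ∈ SF.adm ∧ ⋃₀ ((SF.reduct E).adm) = ∅ :=
  stmt8_general SF E
end

section
/- Let SF = (A,R) be a SETAF and E ∈ cf(SF). Then E ∈ sem(SF) if and only if E ∈ pref(SF) and there is no E' ∈ pref(SF) such that the argument set of the E'-reduct is a proper subset of the argument set of the E-reduct, i.e., A(SF^{E'}) ⊊ A(SF^E). -/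
/-!
The reduct `SF^E` has argument set `A ∖ E⊕`, so for admissible sets comparing reducts by
proper inclusion is the same as comparing ranges in the opposite direction. It then remains
to see that range-maximality among admissible sets is the same as range-maximality among
preferred ones: a semi-stable set is preferred, since enlarging a conflict-free set strictly
enlarges its range, and every admissible set lies in a preferred one with at least its range.
-/

namespace SETAF

variable {α : Type*} (SF : SETAF α)

lemma plus_mono {S T : Set α} (h : S ⊆ T) : SF.plus S ⊆ SF.plus T :=
  fun _ ⟨B, hB, hR⟩ ↦ ⟨B, hB.trans h, hR⟩

lemma range_mono {S T : Set α} (h : S ⊆ T) : SF.range S ⊆ SF.range T :=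
  Set.union_subset_union h (SF.plus_mono h)

lemma plus_subset_A (S : Set α) : SF.plus S ⊆ SF.A :=
  fun _ ⟨_, _, hR⟩ ↦ SF.head_mem _ hR

lemma range_subset_A {S : Set α} (h : S ⊆ SF.A) : SF.range S ⊆ SF.A :=
  Set.union_subset h (SF.plus_subset_A S)

lemma reduct_A_ssubset_iff {S T : Set α} (hS : S ⊆ SF.A) (hT : T ⊆ SF.A) :
    (SF.reduct T).A ⊂ (SF.reduct S).A ↔ SF.range S ⊂ SF.range T := by
  have hS' := SF.range_subset_A hS
  have hT' := SF.range_subset_A hT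
  simp only [reduct, Set.ssubset_def, Set.sdiff_subset_sdiff_iff_subset hS' hT',
    Set.sdiff_subset_sdiff_iff_subset hT' hS']

/-- An argument of `T ∖ S` cannot be attacked by `S ⊆ T` without a conflict in `T`. -/
lemma range_ssubset_range {S T : Set α} (hT : T ∈ SF.cf) (hST : S ⊂ T) :
    SF.range S ⊂ SF.range T := by
  refine (Set.ssubset_iff_of_subset (SF.range_mono hST.1)).2 ?_
  obtain ⟨a, haT, haS⟩ := Set.exists_of_ssubset hST
  refine ⟨a, Or.inl haT, ?_⟩
  rintro (haS' | ⟨B, hBS, hR⟩)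
  · exact haS haS'
  · exact hT.2 (B, a) hR (Set.union_subset (hBS.trans hST.1) (Set.singleton_subset_iff.2 haT))

lemma pref_of_sem {E : Set α} (hE : E ∈ SF.sem) : E ∈ SF.pref :=
  ⟨hE.1, fun ⟨T, hT, hET⟩ ↦ hE.2 ⟨T, hT, SF.range_ssubset_range hT.1 hET⟩⟩

lemma exists_pref_superset {T : Set α} (hT : T ∈ SF.adm) : ∃ P ∈ SF.pref, T ⊆ P := by
  have hfin : {S : Set α | S ∈ SF.adm ∧ T ⊆ S}.Finite :=
    SF.finA.finite_subsets.subset fun S hS ↦ hS.1.1.1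
  obtain ⟨P, ⟨hP, hTP⟩, hmax⟩ := hfin.exists_maximalFor id _ ⟨T, hT, subset_rfl⟩
  exact ⟨P, ⟨hP, fun ⟨U, hU, hPU⟩ ↦ hPU.2 (hmax ⟨hU, hTP.trans hPU.1⟩ hPU.1)⟩, hTP⟩

lemma mem_sem_iff_mem_pref_and_not_range_ssubset {E : Set α} :
    E ∈ SF.sem ↔ E ∈ SF.pref ∧ ¬ ∃ P ∈ SF.pref, SF.range E ⊂ SF.range P := by
  refine ⟨fun hE ↦ ⟨SF.pref_of_sem hE, fun ⟨P, hP, hEP⟩ ↦ hE.2 ⟨P, hP.1, hEP⟩⟩, ?_⟩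
  rintro ⟨hE, hmax⟩
  refine ⟨hE.1, fun ⟨T, hT, hET⟩ ↦ ?_⟩
  obtain ⟨P, hP, hTP⟩ := SF.exists_pref_superset hT
  exact hmax ⟨P, hP, hET.trans_subset (SF.range_mono hTP)⟩

end SETAF

theorem stmt10_general {α : Type*} (SF : SETAF α) (E : Set α) :
    E ∈ SF.sem ↔ E ∈ SF.pref ∧
      ¬ ∃ E' ∈ SF.pref, (SF.reduct E').A ⊂ (SF.reduct E).A := by
  rw [SF.mem_sem_iff_mem_pref_and_not_range_ssubset]
  refine and_congr_right fun hE ↦ not_congr (exists_congr fun P ↦ and_congr_right fun hP ↦ ?_)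
  exact (SF.reduct_A_ssubset_iff hE.1.1.1 hP.1.1.1).symm

/-- Proposition 1(5): for conflict-free `E`, `E` is semi-stable iff `E` is
    preferred and no preferred `E'` has `A(SF^{E'}) ⊊ A(SF^E)`. -/
theorem stmt10 {α : Type*} (SF : SETAF α) (E : Set α) (hcf : E ∈ SF.cf) :
    E ∈ SF.sem ↔ E ∈ SF.pref ∧
      ¬ ∃ E' ∈ SF.pref, (SF.reduct E').A ⊂ (SF.reduct E).A :=
  stmt10_general SF E
end

section
/- Let SF = (A,R) be a SETAF and E ⊆ A. Then E ∈ stb(SF) if and only if for every S ∈ SCCs(SF) it holds that (E ∩ S) ∈ stb(SF↓_{UP_SF(S,E)}^{(E∖S)⁺_R}). -/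
/-!
An attack on an argument of an SCC `S` has its tail in `S` and in SCCs that precede `S` in the
condensation order of the primal graph. If `E` is stable on those earlier SCCs, a tail argument
outside `S` either lies in `E` or is attacked by `E`, and an attacker of it meeting `S` would
put it on a cycle through `S`. Hence the arguments of `S` defeated from outside are those in
`(E ∖ S)⁺`, and the attacks of `E` on the rest of `S`, cut down to `S`, are those of the
restriction. The converse runs this argument along the condensation order, which is
well-founded since `A` is finite.
-/

namespace SETAF

variable {α : Type*} {SF : SETAF α}

def restrictSCC (SF : SETAF α) (S E : Set α) : SETAF α :=
  SF.restrict (SF.plus (E \ S)) (SF.UPscc S E)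

lemma UPscc_eq (SF : SETAF α) (S E : Set α) : SF.UPscc S E = S \ SF.Dscc S E := by
  ext a
  simp only [UPscc, Uscc, Pscc, Set.mem_union, Set.mem_sdiff, Set.mem_sep_iff]
  tauto

lemma mem_restrictSCC_A {S E : Set α} {a : α} :
    a ∈ (SF.restrictSCC S E).A ↔ a ∈ SF.A ∧ a ∈ S ∧ a ∉ SF.plus (E \ S) := by
  simp only [restrictSCC, restrict, UPscc_eq, Dscc, plus, Set.mem_sdiff, Set.mem_inter_iff,
    Set.mem_ofPred_eq]
  tauto

lemma restrictSCC_A_subset (SF : SETAF α) (S E : Set α) : (SF.restrictSCC S E).A ⊆ S :=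
  fun _ ha => (mem_restrictSCC_A.mp ha).2.1

lemma attacksArg.mono_s13 {S S' : Set α} {a : α} (h : SF.attacksArg S a) (hS : S ⊆ S') :
    SF.attacksArg S' a :=
  let ⟨T, hT, hR⟩ := h
  ⟨T, hT.trans hS, hR⟩

lemma notMem_of_attacksArg {S : Set α} {a : α} (hS : S ∈ SF.cf) (h : SF.attacksArg S a) :
    a ∉ S := by
  obtain ⟨T, hTS, hR⟩ := h
  intro ha
  exact hS.2 (T, a) hR (Set.union_subset hTS (Set.singleton_subset_iff.mpr ha))

lemma influences_of_mem_tail {T : Set α} {t h : α} (hR : (T, h) ∈ SF.R) (ht : t ∈ T) :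
    SF.influences t h :=
  Relation.ReflTransGen.single ⟨T, hR, ht⟩

lemma mem_scc_self (SF : SETAF α) (a : α) : a ∈ SF.scc a :=
  ⟨Relation.ReflTransGen.refl, Relation.ReflTransGen.refl⟩

lemma mem_scc_of_influences {x s t h : α} (hs : s ∈ SF.scc x) (hst : SF.influences s t)
    (hth : SF.influences t h) (hh : h ∈ SF.scc x) : t ∈ SF.scc x :=
  ⟨hs.1.trans hst, hth.trans hh.2⟩

def Precedes (SF : SETAF α) (t a : α) : Prop :=
  SF.influences t a ∧ ¬ SF.influences a t

lemma Precedes.trans {s t a : α} (hst : SF.Precedes s t) (hta : SF.Precedes t a) :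
    SF.Precedes s a :=
  ⟨hst.1.trans hta.1, fun has => hta.2 (has.trans hst.1)⟩

lemma Precedes.irrefl (a : α) : ¬ SF.Precedes a a :=
  fun h => h.2 h.1

lemma Precedes.mem_A {t a : α} (h : SF.Precedes t a) : t ∈ SF.A := by
  rcases h.1.cases_head with rfl | ⟨c, ⟨T, hR, ht⟩, -⟩
  · exact absurd h (Precedes.irrefl t)
  · exact SF.tail_subset _ hR ht

lemma precedes_of_mem_tail {T : Set α} {t h : α} (hR : (T, h) ∈ SF.R) (ht : t ∈ T)
    (htS : t ∉ SF.scc h) : SF.Precedes t h :=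
  ⟨influences_of_mem_tail hR ht, fun hht => htS ⟨hht, influences_of_mem_tail hR ht⟩⟩

/-- Finiteness of `A` makes the number of predecessors a strictly monotone measure. -/
lemma wellFounded_precedes (SF : SETAF α) : WellFounded SF.Precedes := by
  refine Subrelation.wf (fun {t a} hta => ?_) (measure fun a => {b | SF.Precedes b a}.ncard).wf
  refine Set.ncard_lt_ncard ⟨fun b hbt => Precedes.trans hbt hta, fun hsub => ?_⟩
    (SF.finA.subset fun b hb => Precedes.mem_A hb)
  exact Precedes.irrefl t (hsub hta)

lemma exists_mem_tail_inter {E S T : Set α} {h : α} (hR : (T, h) ∈ SF.R) (hTE : T ⊆ E)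
    (hh : h ∉ SF.plus (E \ S)) : ∃ t ∈ T, t ∈ S := by
  by_contra! hTS
  exact hh ⟨T, fun t ht => ⟨hTE ht, hTS t ht⟩, hR⟩

lemma attacksArg_restrictSCC {E S T : Set α} {h : α} (hR : (T, h) ∈ SF.R) (hTE : T ⊆ E)
    (hT : T ∩ SF.plus (E \ S) = ∅) (hh : h ∈ (SF.restrictSCC S E).A) :
    (SF.restrictSCC S E).attacksArg (E ∩ S) h := by
  obtain ⟨t, htT, htS⟩ := exists_mem_tail_inter hR hTE (mem_restrictSCC_A.mp hh).2.2
  have ht : t ∈ (SF.restrictSCC S E).A :=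
    mem_restrictSCC_A.mpr ⟨SF.tail_subset _ hR htT, htS, fun hp => hT.subset ⟨htT, hp⟩⟩
  refine ⟨T ∩ (SF.restrictSCC S E).A,
    fun y hy => ⟨hTE hy.1, SF.restrictSCC_A_subset S E hy.2⟩,
    T, h, hR, hh, hT, ⟨t, htT, ht⟩, rfl⟩

lemma tail_subset_of_inter_subset {E T : Set α} {x h : α} (hR : (T, h) ∈ SF.R)
    (hh : h ∈ SF.scc x) (hT : T ∩ SF.plus (E \ SF.scc x) = ∅)
    (hout : ∀ t ∈ T, t ∉ SF.scc x → t ∉ E → SF.attacksArg E t)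
    (hin : T ∩ (SF.restrictSCC (SF.scc x) E).A ⊆ E) : T ⊆ E := by
  intro t htT
  by_cases htS : t ∈ SF.scc x
  · exact hin ⟨htT, mem_restrictSCC_A.mpr
      ⟨SF.tail_subset _ hR htT, htS, fun hp => hT.subset ⟨htT, hp⟩⟩⟩
  by_contra htE
  obtain ⟨T', hT'E, hT'R⟩ := hout t htT htS htE
  obtain ⟨s, hsT', hsS⟩ := exists_mem_tail_inter hT'R hT'E fun hp => hT.subset ⟨htT, hp⟩
  exact htS (mem_scc_of_influences hsS (influences_of_mem_tail hT'R hsT')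
    (influences_of_mem_tail hR htT) hh)

lemma inter_scc_mem_stb_restrictSCC {E : Set α} (hstb : E ∈ SF.stb) (x : α) :
    E ∩ SF.scc x ∈ (SF.restrictSCC (SF.scc x) E).stb := by
  set S := SF.scc x
  have hsub : E ∩ S ⊆ (SF.restrictSCC S E).A := fun a ⟨haE, haS⟩ =>
    mem_restrictSCC_A.mpr ⟨hstb.1.1 haE, haS,
      fun hp => notMem_of_attacksArg hstb.1 (hp.mono_s13 Set.sdiff_subset) haE⟩
  refine ⟨⟨hsub, ?_⟩, ?_⟩
  · rintro _ ⟨T, h, hR, hh, hT, -, rfl⟩ hconf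
    have hin : T ∩ (SF.restrictSCC S E).A ⊆ E := fun t ht => (hconf (Or.inl ht)).1
    have hTE := tail_subset_of_inter_subset hR (SF.restrictSCC_A_subset S E hh) hT
      (fun t htT _ htE => hstb.2 t ⟨SF.tail_subset _ hR htT, htE⟩) hin
    exact notMem_of_attacksArg hstb.1 ⟨T, hTE, hR⟩ (hconf (Or.inr rfl)).1
  · rintro a ⟨ha, haES⟩
    have haE : a ∉ E := fun haE => haES ⟨haE, SF.restrictSCC_A_subset S E ha⟩
    obtain ⟨T, hTE, hR⟩ := hstb.2 a ⟨(mem_restrictSCC_A.mp ha).1, haE⟩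
    have hT : T ∩ SF.plus (E \ S) = ∅ := Set.eq_empty_of_forall_notMem fun t ⟨htT, hp⟩ =>
      notMem_of_attacksArg hstb.1 (hp.mono_s13 Set.sdiff_subset) (hTE htT)
    exact attacksArg_restrictSCC hR hTE hT ha

section LocallyStable

variable {E : Set α}
  (hloc : ∀ S ∈ SF.SCCs, E ∩ S ∈ (SF.restrictSCC S E).stb)
include hloc

lemma not_union_subset_of_forall_scc (h : α) :
    ∀ T, (T, h) ∈ SF.R → ¬ T ∪ {h} ⊆ E := by
  induction h using SF.wellFounded_precedes.induction with
  | _ h IH =>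
  intro T hR hconf
  have hTE : T ⊆ E := Set.subset_union_left.trans hconf
  have hhE : h ∈ E := hconf (Or.inr rfl)
  have hstb := hloc _ ⟨h, SF.head_mem _ hR, rfl⟩
  have hT : T ∩ SF.plus (E \ SF.scc h) = ∅ := by
    refine Set.eq_empty_of_forall_notMem fun t ⟨htT, hp⟩ => ?_
    by_cases htS : t ∈ SF.scc h
    · exact (mem_restrictSCC_A.mp (hstb.1.1 ⟨hTE htT, htS⟩)).2.2 hp
    · obtain ⟨T', hT'E, hT'R⟩ := hp
      exact IH t (precedes_of_mem_tail hR htT htS) T' hT'R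
        (Set.union_subset (hT'E.trans Set.sdiff_subset)
          (Set.singleton_subset_iff.mpr (hTE htT)))
  have hh := hstb.1.1 ⟨hhE, SF.mem_scc_self h⟩
  exact notMem_of_attacksArg hstb.1 (attacksArg_restrictSCC hR hTE hT hh)
    ⟨hhE, SF.mem_scc_self h⟩

lemma attacksArg_of_forall_scc (a : α) : a ∈ SF.A → a ∉ E → SF.attacksArg E a := by
  induction a using SF.wellFounded_precedes.induction with
  | _ a IH =>
  intro haA haE
  by_cases hp : SF.attacksArg (E \ SF.scc a) a
  · exact hp.mono_s13 Set.sdiff_subset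
  have ha : a ∈ (SF.restrictSCC (SF.scc a) E).A :=
    mem_restrictSCC_A.mpr ⟨haA, SF.mem_scc_self a, hp⟩
  obtain ⟨_, hT'sub, T, _, hR, -, hT, -, heq⟩ :=
    (hloc _ ⟨a, haA, rfl⟩).2 a ⟨ha, fun haE' => haE haE'.1⟩
  obtain ⟨rfl, rfl⟩ := Prod.mk.inj heq
  refine ⟨T, tail_subset_of_inter_subset hR (SF.mem_scc_self a) hT ?_
    (hT'sub.trans Set.inter_subset_left), hR⟩
  exact fun t htT htS htE => IH t (precedes_of_mem_tail hR htT htS)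
    (SF.tail_subset _ hR htT) htE

end LocallyStable

end SETAF

/-- Proposition 2: `E` is stable in `SF` iff for every SCC `S`, `E ∩ S` is stable
    in the restriction `SF↓_{UP_SF(S,E)}^{(E∖S)⁺}`. -/
theorem stmt13 {α : Type*} (SF : SETAF α) (E : Set α) (hE : E ⊆ SF.A) :
    E ∈ SF.stb ↔
      ∀ S ∈ SF.SCCs,
        E ∩ S ∈ (SF.restrict (SF.plus (E \ S)) (SF.UPscc S E)).stb := by
  refine ⟨fun hstb S ⟨x, _, hS⟩ => hS ▸ SETAF.inter_scc_mem_stb_restrictSCC hstb x,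
    fun hloc => ⟨⟨hE, ?_⟩, ?_⟩⟩
  · rintro ⟨T, h⟩ hR
    exact SETAF.not_union_subset_of_forall_scc hloc h T hR
  · rintro a ⟨haA, haE⟩
    exact SETAF.attacksArg_of_forall_scc hloc a haA haE
end
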